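/- Let E ⊂ ℝⁿ be an open set belonging to U_R for some R > 0. Then the nearest-point projection π_E onto ∂E is well defined and of class W^{1,∞} in the open (R/2)-neighbourhood of ∂E, the signed distance d_E is of class W^{2,∞} in that neighbourhood, and there is a positive constant C depending only on R such that ‖d_E‖_{W^{2,∞}} ≤ C and ‖π_E‖_{W^{1,∞}} ≤ C on the (R/2)-neighbourhood of ∂E. -/

import Mathlib

open MeasureTheory Metric Set Filter Topology RealInnerProductSpace
open scoped ENNReal NNReal

noncomputable section

/-- Euclidean `n`-space. -/
abbrev En (n : ℕ) : Type := EuclideanSpace ℝ (Fin n)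

variable {n : ℕ}

/-- The signed distance function of a set `E`,
`d_E(x) = dist(x, E) - dist(x, Eᶜ)`. -/
def sgnDist (E : Set (En n)) (x : En n) : ℝ :=
  Metric.infDist x E - Metric.infDist x Eᶜ

/-- The class `U_R`: open sets satisfying the uniform two-sided tangent ball condition
of radius `R`. -/
def UR (R : ℝ) (E : Set (En n)) : Prop :=
  IsOpen E ∧ ∀ p ∈ frontier E, ∃ p' p'' : En n,
    dist p p' = R ∧ dist p p'' = R ∧ ball p' R ⊆ E ∧ ball p'' R ⊆ Eᶜ

/-- The class `U_R(Ω)`: members of `U_R` contained in `Ω` at distance at least `R`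
from `∂Ω`. -/
def URin (R : ℝ) (Ω E : Set (En n)) : Prop :=
  UR R E ∧ E ⊆ Ω ∧ ∀ x ∈ E, ∀ y ∈ frontier Ω, R ≤ dist x y

/-- Open sets of class `C^{1,1}` (uniform two-sided tangent ball condition). -/
def IsC11Set (E : Set (En n)) : Prop := IsOpen E ∧ ∃ R > 0, UR R E

/-- Open sets with boundary of class `C^{2,α}`, expressed through the regularity of the
signed distance function near the boundary. -/
def IsC2AlphaSet (α : ℝ) (E : Set (En n)) : Prop :=
  IsOpen E ∧ ∃ δ > 0, ContDiffOn ℝ 2 (sgnDist E) (thickening δ (frontier E)) ∧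
    ∃ Λ : ℝ, ∀ x ∈ thickening δ (frontier E), ∀ y ∈ thickening δ (frontier E),
      ‖fderiv ℝ (fderiv ℝ (sgnDist E)) x - fderiv ℝ (fderiv ℝ (sgnDist E)) y‖ ≤
        Λ * dist x y ^ α

/-- `Λ^α(∂E) ≤ Λ`: the `α`-Hölder seminorm of the (tangential) gradient of the unit
normal field `ν = ∇ d_E` along `∂E` is at most `Λ`. -/
def HolderNormalBound (α : ℝ) (E : Set (En n)) (Λ : ℝ) : Prop :=
  ∀ x ∈ frontier E, ∀ y ∈ frontier E,
    ‖fderiv ℝ (gradient (sgnDist E)) x - fderiv ℝ (gradient (sgnDist E)) y‖ ≤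
      Λ * dist x y ^ α

/-- The Laplacian of a real-valued function on Euclidean space. -/
def lapl (u : En n → ℝ) (x : En n) : ℝ :=
  ∑ i : Fin n, fderiv ℝ (fun y => fderiv ℝ u y (EuclideanSpace.single i 1)) x
    (EuclideanSpace.single i 1)

/-- The divergence of a vector field on Euclidean space. -/
def diverg (V : En n → En n) (x : En n) : ℝ :=
  ∑ i : Fin n, ⟪fderiv ℝ V x (EuclideanSpace.single i 1), EuclideanSpace.single i 1⟫

/-- `ν` is the outer unit normal to `E` at `x`, in the sense of interior and exterior
tangent balls. -/
def IsOuterNormal (E : Set (En n)) (x ν : En n) : Prop :=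
  ‖ν‖ = 1 ∧ ∃ r > 0, ball (x - r • ν) r ⊆ E ∧ ball (x + r • ν) r ⊆ Eᶜ

/-- Homogeneous Neumann boundary condition `∂_ν u = 0` on `∂U`, in the sense of
boundary traces of the normal derivative. -/
def NeumannZero (u : En n → ℝ) (U : Set (En n)) : Prop :=
  ∀ x ∈ frontier U, ∀ ν : En n, IsOuterNormal U x ν →
    Tendsto (fun y => fderiv ℝ u y ν) (𝓝[U] x) (𝓝 0)

/-- Conormal homogeneous Neumann boundary condition `A ∇u · ν = 0` on `∂U`. -/
def CoNeumannZero (A : En n → (En n →L[ℝ] En n)) (u : En n → ℝ) (U : Set (En n)) : Prop :=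
  ∀ x ∈ frontier U, ∀ ν : En n, IsOuterNormal U x ν →
    Tendsto (fun y => ⟪A y (gradient u y), ν⟫) (𝓝[U] x) (𝓝 0)

/-- `u` is a (classical) solution of the Neumann problem `Δu = β (u - g)` in `U`,
`∂_ν u = 0` on `∂U`. -/
def IsNeumannSolution (U : Set (En n)) (β : ℝ) (g u : En n → ℝ) : Prop :=
  (∀ x ∈ U, ContDiffAt ℝ 2 u x) ∧ (∀ x ∈ U, lapl u x = β * (u x - g x)) ∧ NeumannZero u U

/-- `g ∈ W^{1,∞}(U)` with norm at most `M`: `g` is bounded by `M` and `M`-Lipschitz on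
each connected component of `U`. -/
def MemW1inf (U : Set (En n)) (g : En n → ℝ) (M : ℝ) : Prop :=
  (∀ x ∈ U, |g x| ≤ M) ∧
  ∀ x ∈ U, LipschitzOnWith (Real.toNNReal M) g (connectedComponentIn U x)

/-- `g ∈ W^{2,∞}(U)` with norm at most `M`. -/
def MemW2inf (U : Set (En n)) (g : En n → ℝ) (M : ℝ) : Prop :=
  (∀ x ∈ U, |g x| ≤ M) ∧ (∀ x ∈ U, DifferentiableAt ℝ g x) ∧
  (∀ x ∈ U, ‖fderiv ℝ g x‖ ≤ M) ∧
  ∀ x ∈ U, LipschitzOnWith (Real.toNNReal M) (fun y => fderiv ℝ g y)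
    (connectedComponentIn U x)

/-- The `C^{0,γ}(s)` norm of `f` is at most `M`. -/
def HolderBound (γ : ℝ) (s : Set (En n)) (f : En n → ℝ) (M : ℝ) : Prop :=
  (∀ x ∈ s, |f x| ≤ M) ∧ ∀ x ∈ s, ∀ y ∈ s, |f x - f y| ≤ M * dist x y ^ γ

/-- Nontangential one-sided trace `a` of `g` at `x` from the side of the unit vector
`ν`: the limit of `g` along the open cone around `ν` with vertex `x`. -/
def ConeTrace (g : En n → ℝ) (x ν : En n) (a : ℝ) : Prop :=
  Tendsto g (𝓝[{y | ‖y - x‖ < 2 * ⟪ν, y - x⟫}] x) (𝓝 a)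

/-- `g` has a jump of size larger than `S` at `x` (upper trace minus lower trace
exceeds `S`). -/
def JumpGT (g : En n → ℝ) (x : En n) (S : ℝ) : Prop :=
  ∃ ν : En n, ‖ν‖ = 1 ∧ ∃ a b : ℝ, ConeTrace g x ν a ∧ ConeTrace g x (-ν) b ∧ S < |a - b|

/-- `g` has a nontrivial jump at `x` (i.e. `x ∈ S_g`). -/
def JumpNE (g : En n → ℝ) (x : En n) : Prop :=
  ∃ ν : En n, ‖ν‖ = 1 ∧ ∃ a b : ℝ, ConeTrace g x ν a ∧ ConeTrace g x (-ν) b ∧ a ≠ b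

/-- The (non-homogeneous) Mumford–Shah energy of the pair `(u, K)`:
`∫_{Ω \ K} |∇u|² dx + H^{n-1}(K) + β ∫_{Ω \ K} (u - g)² dx`. -/
def MSEnergy (Ω : Set (En n)) (β : ℝ) (g u : En n → ℝ) (K : Set (En n)) : ℝ≥0∞ :=
  ENNReal.ofReal (∫ x in Ω \ K, ‖fderiv ℝ u x‖ ^ 2) + μH[((n : ℝ) - 1)] K +
  ENNReal.ofReal (β * ∫ x in Ω \ K, (u x - g x) ^ 2)

/-- Admissible pairs `(u, K)` for the (strong formulation of the) Mumford–Shah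
functional on `Ω`: `K` is a closed set of singularities contained in `closure Ω` and
`u` is differentiable on `Ω \ K`. -/
def MSAdm (Ω : Set (En n)) (u : En n → ℝ) (K : Set (En n)) : Prop :=
  K ⊆ closure Ω ∧ IsClosed K ∧ ∀ x ∈ Ω \ K, DifferentiableAt ℝ u x

/-- `u`, with singular set `K`, is the unique absolute minimizer of `F_{β,g}` over
(strong) Mumford–Shah competitors on `Ω`. -/
def UniqueMinimizer (Ω : Set (En n)) (β : ℝ) (g u : En n → ℝ) (K : Set (En n)) : Prop :=
  MSAdm Ω u K ∧ ∀ v L, MSAdm Ω v L →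
    MSEnergy Ω β g u K ≤ MSEnergy Ω β g v L ∧
    (MSEnergy Ω β g v L ≤ MSEnergy Ω β g u K → ∀ᵐ x ∂(volume.restrict Ω), v x = u x)

/-- A simple arc of class `C³` up to the endpoints, parametrized on `[0,1]`. -/
def IsC3Arc (γ : ℝ → En n) : Prop :=
  ContDiffOn ℝ 3 γ (Icc 0 1) ∧ InjOn γ (Ico 0 1) ∧
  ∀ t ∈ Icc (0:ℝ) 1, derivWithin γ (Icc 0 1) t ≠ 0

/-- The set of vertices (endpoints of the boundary arcs) of a curvilinear polygon. -/
def polyVertices {k : ℕ} (arcs : Fin k → ℝ → En n) : Set (En n) :=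
  ⋃ j, {arcs j 0, arcs j 1}

/-- A curvilinear polygon: a bounded connected open set whose boundary is a finite
union of simple `C³` arcs, meeting only at their endpoints, at corners with
(interior) angles in `(0, π)`. -/
def CurvPolygon (Ω : Set (En n)) (k : ℕ) (arcs : Fin k → ℝ → En n) : Prop :=
  IsOpen Ω ∧ Bornology.IsBounded Ω ∧ Ω.Nonempty ∧ IsConnected Ω ∧
  (∀ j, IsC3Arc (arcs j)) ∧
  (frontier Ω = ⋃ j, arcs j '' Icc 0 1) ∧
  (∀ i j, i ≠ j → (arcs i '' Ioo 0 1) ∩ (arcs j '' Icc 0 1) = ∅) ∧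
  (∀ j, ∀ t ∈ ({0, 1} : Set ℝ), ∃ w : En n, w ≠ 0 ∧ ∃ ε > 0,
      ∀ x ∈ Ω ∩ ball (arcs j t) ε, 0 < ⟪w, x - arcs j t⟫) ∧
  (∀ i j, i ≠ j → ∀ s ∈ ({0, 1} : Set ℝ), ∀ t ∈ ({0, 1} : Set ℝ), arcs i s = arcs j t →
      LinearIndependent ℝ
        ![derivWithin (arcs i) (Icc 0 1) s, derivWithin (arcs j) (Icc 0 1) t])

/-- A simple closed curve of class `C^{2,α}` (parametrized periodically). -/
def IsClosedC2AlphaCurve (α : ℝ) (γ : ℝ → En n) : Prop :=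
  (∀ t, γ (t + 1) = γ t) ∧ ContDiff ℝ 2 γ ∧ InjOn γ (Ico 0 1) ∧ (∀ t, deriv γ t ≠ 0) ∧
  ∃ Λ : ℝ, ∀ s t : ℝ, ‖deriv (deriv γ) s - deriv (deriv γ) t‖ ≤ Λ * |s - t| ^ α

/-- A simple arc of class `C^{2,α}`, of class `C³` near its endpoints, contained in the
curvilinear polygon `Ω` except for its endpoints, which lie on `∂Ω` away from the
vertices and at which the arc meets `∂Ω` orthogonally. -/
def IsTransversalArc (Ω : Set (En n)) {k : ℕ} (arcs : Fin k → ℝ → En n) (α : ℝ)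
    (γ : ℝ → En n) : Prop :=
  ContDiffOn ℝ 2 γ (Icc 0 1) ∧ InjOn γ (Icc 0 1) ∧
  (∀ t ∈ Icc (0:ℝ) 1, derivWithin γ (Icc 0 1) t ≠ 0) ∧
  (∃ η > 0, ContDiffOn ℝ 3 γ (Icc 0 η) ∧ ContDiffOn ℝ 3 γ (Icc (1 - η) 1)) ∧
  γ '' Ioo 0 1 ⊆ Ω ∧
  γ 0 ∈ frontier Ω \ polyVertices arcs ∧ γ 1 ∈ frontier Ω \ polyVertices arcs ∧
  (∀ j, ∀ s ∈ Icc (0:ℝ) 1, ∀ t ∈ ({0, 1} : Set ℝ), arcs j s = γ t →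
      ⟪derivWithin γ (Icc 0 1) t, derivWithin (arcs j) (Icc 0 1) s⟫ = 0) ∧
  ∃ Λ : ℝ, ∀ s ∈ Icc (0:ℝ) 1, ∀ t ∈ Icc (0:ℝ) 1,
    ‖derivWithin (derivWithin γ (Icc 0 1)) (Icc 0 1) s -
      derivWithin (derivWithin γ (Icc 0 1)) (Icc 0 1) t‖ ≤ Λ * |s - t| ^ α

/-- Setting of Theorem `cor1`: `Ω ⊆ ℝⁿ` bounded of class `C^{1,1}` and `Γ` the union of
the boundaries of finitely many disjoint `C^{2,α}` sets in `U_R(Ω)` at mutual distance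
at least `R`. -/
def SettingA (Ω Γ : Set (En n)) : Prop :=
  IsC11Set Ω ∧ Bornology.IsBounded Ω ∧
  ∃ α ∈ Ioo (0:ℝ) 1, ∃ R > 0, ∃ k : ℕ, ∃ O : Fin k → Set (En n),
    (∀ i, IsC2AlphaSet α (O i)) ∧ (∀ i, URin R Ω (O i)) ∧
    (∀ i j, i ≠ j → ∀ x ∈ O i, ∀ y ∈ O j, R ≤ dist x y) ∧
    Γ = ⋃ i, frontier (O i)

/-- Setting of Theorem `cor2`: `Ω ⊆ ℝ²` a curvilinear polygon and `Γ` a finite disjoint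
union of `C^{2,α}` curves, each either closed and contained in `Ω`, or meeting `∂Ω`
orthogonally at two regular points. -/
def SettingB (Ω Γ : Set (En n)) : Prop :=
  n = 2 ∧ ∃ k : ℕ, ∃ arcs : Fin k → ℝ → En n, CurvPolygon Ω k arcs ∧
    ∃ α ∈ Ioo (0:ℝ) 1, ∃ m : ℕ, ∃ γ : Fin m → ℝ → En n,
      (∀ j, (IsClosedC2AlphaCurve α (γ j) ∧ range (γ j) ⊆ Ω) ∨
        IsTransversalArc Ω arcs α (γ j)) ∧
      (∀ i j : Fin m, i ≠ j → Disjoint (γ i '' Icc 0 1) (γ j '' Icc 0 1)) ∧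
      Γ = ⋃ j, γ j '' Icc 0 1

/-- The affine interpolation of a discrete evolution `U : ℕ → (En n → ℝ)` with time
step `δ`. -/
def affInterp (δ : ℝ) (U : ℕ → En n → ℝ) (t : ℝ) (x : En n) : ℝ :=
  (1 - (t / δ - (⌊t / δ⌋₊ : ℝ))) * U ⌊t / δ⌋₊ x +
    (t / δ - (⌊t / δ⌋₊ : ℝ)) * U (⌊t / δ⌋₊ + 1) x

/-- `v` is a minimizing movement for the homogeneous Mumford–Shah functional with
initial datum `u₀`: for a suitable sequence `δ k ↓ 0`, the affine interpolations of the
discrete minimizing schemes converge to `v t` in `L²(Ω)` for every `t > 0`. -/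
def IsMinimizingMovement (Ω : Set (En n)) (u₀ : En n → ℝ) (v : ℝ → En n → ℝ) : Prop :=
  ∃ δ : ℕ → ℝ, (∀ k, 0 < δ k) ∧ Tendsto δ atTop (𝓝 0) ∧
    ∃ U : ℕ → ℕ → En n → ℝ, ∃ K : ℕ → ℕ → Set (En n),
      (∀ k, U k 0 = u₀) ∧
      (∀ k i, MSAdm Ω (U k (i + 1)) (K k (i + 1)) ∧ ∀ w L, MSAdm Ω w L →
        MSEnergy Ω (1 / δ k) (U k i) (U k (i + 1)) (K k (i + 1)) ≤
          MSEnergy Ω (1 / δ k) (U k i) w L) ∧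
      ∀ t > 0, Tendsto (fun k => ∫ x in Ω, (affInterp (δ k) (U k) t x - v t x) ^ 2)
        atTop (𝓝 0)

/-!
Every boundary point `p` of `E ∈ U_R` carries a unit normal `ν p`, read off from the two tangent
balls of radius `R`. Comparing these balls with `∂E` gives two estimates: `∂E` stays
quadratically close to each tangent plane, `2R |⟪ν p, q - p⟫| ≤ ‖q - p‖²`, and `ν` is
`2/R`-Lipschitz along `∂E`. If `p` is a nearest boundary point to `x`, the tangent ball on the
other side of `∂E` forces `x - p = d_E x • ν p`. Within distance `R/2` of `∂E` these facts
make nearest boundary points depend `2`-Lipschitz on the base point, so they are unique, and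
give `|d_E y - d_E x - ⟪ν (π x), y - x⟫| ≤ (6/R) ‖y - x‖²`. Hence `∇d_E = ν ∘ π_E`, which is
Lipschitz as a composition.
-/

section Metric

variable {X : Type*} [PseudoMetricSpace X]

theorem le_dist_of_mem_frontier_of_ball_subset {S : Set X} {c q : X} {r : ℝ}
    (hS : ball c r ⊆ S) (hq : q ∈ frontier S) : r ≤ dist q c :=
  not_lt.1 fun hlt => hq.2 (interior_maximal hS isOpen_ball hlt)

def IsNearestPoint (s : Set X) (x p : X) : Prop :=
  p ∈ s ∧ dist x p = infDist x s

theorem exists_isNearestPoint_of_mem_thickening [ProperSpace X] {s : Set X} (hs : IsClosed s)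
    {δ : ℝ} {x : X} (hx : x ∈ thickening δ s) : ∃ p, IsNearestPoint s x p := by
  obtain ⟨z, hz, -⟩ := mem_thickening_iff.1 hx
  obtain ⟨p, hp, hxp⟩ := hs.exists_infDist_eq_dist ⟨z, hz⟩ x
  exact ⟨p, hp, hxp.symm⟩

end Metric

section Normed

variable {F : Type*} [NormedAddCommGroup F] [NormedSpace ℝ F]

theorem two_mul_le_dist_of_ball_subset_of_ball_subset_compl {S : Set F} {a b : F} {r : ℝ}
    (hr : 0 < r) (ha : ball a r ⊆ S) (hb : ball b r ⊆ Sᶜ) : 2 * r ≤ dist a b := by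
  rw [two_mul, ← disjoint_ball_ball_iff hr hr]
  exact disjoint_compl_right.mono ha hb

theorem infDist_le_dist_sub_of_ball_subset {S : Set F} {c x : F} {r : ℝ} (hr : 0 < r)
    (hS : ball c r ⊆ S) (hx : r ≤ dist x c) : infDist x S ≤ dist x c - r := by
  refine le_of_forall_pos_lt_add fun ε hε => ?_
  obtain ⟨y, hxy, hyc⟩ := exists_dist_lt_lt (δ := dist x c - r + ε) (by linarith) hr
    (by linarith)
  exact (infDist_le_dist_of_mem (hS hyc)).trans_lt (by linarith)

theorem infDist_compl_eq_infDist_frontier [FiniteDimensional ℝ F] {S : Set F} {x : F}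
    (hx : x ∈ S) (hS : S ≠ univ) : infDist x Sᶜ = infDist x (frontier S) := by
  obtain ⟨y, hy, hxy⟩ := exists_mem_frontier_infDist_compl_eq_dist hx hS
  refine le_antisymm ?_ (hxy ▸ infDist_le_dist_of_mem hy)
  rw [← infDist_closure (s := Sᶜ), ← frontier_compl]
  exact infDist_le_infDist_of_subset frontier_subset_closure ⟨y, by rwa [frontier_compl]⟩

theorem infDist_eq_infDist_frontier [FiniteDimensional ℝ F] {S : Set F} {x : F}
    (hx : x ∉ S) (hS : S.Nonempty) : infDist x S = infDist x (frontier S) := by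
  simpa only [compl_compl, frontier_compl] using
    infDist_compl_eq_infDist_frontier (show x ∈ Sᶜ from hx) (compl_ne_univ.2 hS)

theorem eq_norm_smul_of_norm_add_le_norm_add_smul [StrictConvexSpace ℝ F] {u ν : F} {R : ℝ}
    (hR : 0 < R) (hν : ‖ν‖ = 1) (h : ‖u‖ + R ≤ ‖u + R • ν‖) : u = ‖u‖ • ν := by
  have hRν : ‖R • ν‖ = R := by rw [norm_smul, hν, mul_one, Real.norm_of_nonneg hR.le]
  have hray : SameRay ℝ u (R • ν) :=
    sameRay_iff_norm_add.2 (le_antisymm (norm_add_le _ _) (by rwa [hRν]))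
  have := hray.norm_smul_eq
  rw [hRν, smul_comm] at this
  exact (smul_right_injective F hR.ne' this).symm

end Normed

theorem hasGradientAt_of_abs_sub_inner_le_sq {F : Type*} [NormedAddCommGroup F]
    [InnerProductSpace ℝ F] [CompleteSpace F] {f : F → ℝ} {g x : F} {C : ℝ}
    (h : ∀ᶠ y in 𝓝 x, |f y - f x - ⟪g, y - x⟫| ≤ C * ‖y - x‖ ^ 2) : HasGradientAt f g x := by
  rw [hasGradientAt_iff_isLittleO]
  refine (Asymptotics.IsBigO.of_bound C ?_).trans_isLittleO
    (Asymptotics.isLittleO_pow_sub_sub x one_lt_two)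
  filter_upwards [h] with y hy
  rwa [Real.norm_eq_abs, norm_pow, norm_norm]

section OuterNormal

variable {F : Type*} [NormedAddCommGroup F] [InnerProductSpace ℝ F]

structure IsOuterNormalOfRadius (R : ℝ) (E : Set F) (p ν : F) : Prop where
  norm_eq_one : ‖ν‖ = 1
  ball_sub_subset : ball (p - R • ν) R ⊆ E
  ball_add_subset_compl : ball (p + R • ν) R ⊆ Eᶜ

variable {R : ℝ} {E : Set F} {p q ν νp νq : F}

namespace IsOuterNormalOfRadius

theorem two_mul_abs_inner_le (hR : 0 < R) (hν : IsOuterNormalOfRadius R E p ν)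
    (hq : q ∈ frontier E) : 2 * R * |⟪ν, q - p⟫| ≤ ‖q - p‖ ^ 2 := by
  have expand : ∀ s : ℝ, ‖q - p + s • ν‖ ^ 2 = ‖q - p‖ ^ 2 + 2 * s * ⟪ν, q - p⟫ + s ^ 2 := by
    intro s
    rw [norm_add_sq_real, real_inner_smul_right, norm_smul, hν.norm_eq_one, real_inner_comm,
      Real.norm_eq_abs, mul_one, sq_abs]
    ring
  have hin : R ≤ ‖q - p + R • ν‖ := by
    have := le_dist_of_mem_frontier_of_ball_subset hν.ball_sub_subset hq
    rwa [dist_eq_norm, sub_sub_eq_add_sub, add_sub_right_comm] at this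
  have hout : R ≤ ‖q - p + (-R) • ν‖ := by
    have := le_dist_of_mem_frontier_of_ball_subset hν.ball_add_subset_compl
      (frontier_compl E ▸ hq)
    rwa [dist_eq_norm, ← sub_sub, sub_eq_add_neg _ (R • ν), ← neg_smul] at this
  have h₁ := pow_le_pow_left₀ hR.le hin 2
  have h₂ := pow_le_pow_left₀ hR.le hout 2
  rw [expand] at h₁ h₂
  rcases abs_cases ⟪ν, q - p⟫ with ⟨h, -⟩ | ⟨h, -⟩ <;> rw [h] <;> nlinarith

theorem mul_norm_sub_le (hR : 0 < R) (hνp : IsOuterNormalOfRadius R E p νp)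
    (hνq : IsOuterNormalOfRadius R E q νq) (hp : p ∈ frontier E) (hq : q ∈ frontier E) :
    R * ‖νp - νq‖ ≤ 2 * ‖p - q‖ := by
  have hsep : 2 * R ≤ ‖p - q - R • (νp + νq)‖ := by
    have := two_mul_le_dist_of_ball_subset_of_ball_subset_compl hR hνp.ball_sub_subset
      hνq.ball_add_subset_compl
    rwa [dist_eq_norm, show p - R • νp - (q + R • νq) = p - q - R • (νp + νq) by
      rw [smul_add]; abel] at this
  have hpar : ‖νp + νq‖ ^ 2 = 4 - ‖νp - νq‖ ^ 2 := by
    rw [norm_add_sq_real, norm_sub_sq_real, hνp.norm_eq_one, hνq.norm_eq_one]; ring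
  have hexpand : ‖p - q - R • (νp + νq)‖ ^ 2 =
      ‖p - q‖ ^ 2 - 2 * R * (⟪νp, p - q⟫ + ⟪νq, p - q⟫) + R ^ 2 * (4 - ‖νp - νq‖ ^ 2) := by
    rw [norm_sub_sq_real, real_inner_smul_right, inner_add_right, real_inner_comm (p - q) νp,
      real_inner_comm (p - q) νq, norm_smul, mul_pow, Real.norm_of_nonneg hR.le, hpar]
    ring
  have htp : -(2 * R * ⟪νp, p - q⟫) ≤ ‖p - q‖ ^ 2 := by
    have := (hνp.two_mul_abs_inner_le hR hq).trans' <|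
      mul_le_mul_of_nonneg_left (le_abs_self _) (by positivity)
    rwa [← neg_sub, inner_neg_right, norm_neg, mul_neg] at this
  have htq : -(2 * R * ⟪νq, p - q⟫) ≤ ‖p - q‖ ^ 2 := by
    have := (hνq.two_mul_abs_inner_le hR hp).trans' <|
      mul_le_mul_of_nonneg_left (neg_le_abs _) (by positivity)
    rwa [mul_neg] at this
  have key : (R * ‖νp - νq‖) ^ 2 ≤ (2 * ‖p - q‖) ^ 2 := by
    nlinarith [pow_le_pow_left₀ (by positivity) hsep 2]
  exact (pow_le_pow_iff_left₀ (by positivity) (by positivity) two_ne_zero).1 key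

section Pairs

variable (hR : 0 < R) (hνp : IsOuterNormalOfRadius R E p νp)
  (hνq : IsOuterNormalOfRadius R E q νq) (hp : p ∈ frontier E) (hq : q ∈ frontier E)
  {x y : F} {dx dy : ℝ} (hx : x - p = dx • νp) (hy : y - q = dy • νq)
  (hdx : |dx| ≤ R / 2) (hdy : |dy| ≤ R / 2)
include hR hνp hνq hp hq hx hy hdx hdy

theorem norm_sub_le_two_mul_norm_sub : ‖p - q‖ ≤ 2 * ‖x - y‖ := by
  have hinner : ⟪p - q, x - y⟫ = ‖p - q‖ ^ 2 + (dx * ⟪p - q, νp⟫ - dy * ⟪p - q, νq⟫) := by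
    rw [show x - y = (p - q) + ((x - p) - (y - q)) by abel, hx, hy, inner_add_right,
      inner_sub_right (p - q) (dx • νp), real_inner_smul_right, real_inner_smul_right,
      real_inner_self_eq_norm_sq]
  have hbp : |dx * ⟪p - q, νp⟫| ≤ ‖p - q‖ ^ 2 / 4 := by
    have := hνp.two_mul_abs_inner_le hR hq
    rw [← neg_sub, inner_neg_right, abs_neg, norm_neg, real_inner_comm] at this
    rw [abs_mul]
    nlinarith [abs_nonneg dx, abs_nonneg ⟪p - q, νp⟫]
  have hbq : |dy * ⟪p - q, νq⟫| ≤ ‖p - q‖ ^ 2 / 4 := by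
    have := hνq.two_mul_abs_inner_le hR hp
    rw [real_inner_comm] at this
    rw [abs_mul]
    nlinarith [abs_nonneg dy, abs_nonneg ⟪p - q, νq⟫]
  have hhalf : ‖p - q‖ ^ 2 / 2 ≤ ‖p - q‖ * ‖x - y‖ := by
    have := real_inner_le_norm (p - q) (x - y)
    linarith [(abs_le.1 hbp).1, (abs_le.1 hbq).2]
  nlinarith [norm_nonneg (p - q), norm_nonneg (x - y)]

/-- With `dx = d_E x` and `dy = d_E y`, the first-order expansion of `d_E` at `x` with
gradient `νp`. -/
theorem mul_abs_sub_sub_inner_le : R * |dy - dx - ⟪νp, y - x⟫| ≤ 6 * ‖y - x‖ ^ 2 := by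
  have hν₁ := hνp.norm_eq_one
  have hν₂ := hνq.norm_eq_one
  have hsplit : dy - dx - ⟪νp, y - x⟫ = dy * (1 - ⟪νp, νq⟫) - ⟪νp, q - p⟫ := by
    rw [show y - x = (q - p) + ((y - q) - (x - p)) by abel, hx, hy, inner_add_right,
      inner_sub_right νp (dy • νq), real_inner_smul_right, real_inner_smul_right,
      real_inner_self_eq_norm_sq, hν₁]
    ring
  have hcos : ‖νp - νq‖ ^ 2 = 2 * (1 - ⟪νp, νq⟫) := by
    rw [norm_sub_sq_real, hν₁, hν₂]; ring
  have hcos_nonneg : 0 ≤ 1 - ⟪νp, νq⟫ := by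
    nlinarith [sq_nonneg ‖νp - νq‖]
  have hproj : ‖p - q‖ ≤ 2 * ‖y - x‖ := norm_sub_rev y x ▸
    norm_sub_le_two_mul_norm_sub hR hνp hνq hp hq hx hy hdx hdy
  have hnormal : (R * ‖νp - νq‖) ^ 2 ≤ (2 * ‖p - q‖) ^ 2 :=
    pow_le_pow_left₀ (by positivity) (hνp.mul_norm_sub_le hR hνq hp hq) 2
  have htangent := hνp.two_mul_abs_inner_le hR hq
  rw [norm_sub_rev] at htangent
  have hbend : R ^ 2 * (1 - ⟪νp, νq⟫) ≤ 2 * ‖p - q‖ ^ 2 := by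
    rw [mul_pow, mul_pow, hcos] at hnormal
    linarith
  have hcurv : R * (|dy| * (1 - ⟪νp, νq⟫)) ≤ ‖p - q‖ ^ 2 := by
    nlinarith [mul_le_mul_of_nonneg_right hdy (mul_nonneg hR.le hcos_nonneg)]
  have hsq : ‖p - q‖ ^ 2 ≤ 4 * ‖y - x‖ ^ 2 := by
    nlinarith [norm_nonneg (p - q)]
  calc R * |dy - dx - ⟪νp, y - x⟫|
      ≤ R * (|dy| * (1 - ⟪νp, νq⟫) + |⟪νp, q - p⟫|) := by
        rw [hsplit]
        refine mul_le_mul_of_nonneg_left ?_ hR.le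
        exact (abs_sub _ _).trans (by rw [abs_mul, abs_of_nonneg hcos_nonneg])
    _ ≤ 6 * ‖y - x‖ ^ 2 := by nlinarith

end Pairs

end IsOuterNormalOfRadius

end OuterNormal

section SignedDistance

variable {R : ℝ} {E : Set (En n)} {x y p q ν νp νq : En n}

theorem sgnDist_of_mem (hx : x ∈ E) (hE : (frontier E).Nonempty) :
    sgnDist E x = -infDist x (frontier E) := by
  rw [sgnDist, infDist_zero_of_mem hx, zero_sub,
    infDist_compl_eq_infDist_frontier hx (by rintro rfl; simp at hE)]

theorem sgnDist_of_notMem (hx : x ∉ E) (hE : (frontier E).Nonempty) :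
    sgnDist E x = infDist x (frontier E) := by
  rw [sgnDist, infDist_zero_of_mem (show x ∈ Eᶜ from hx), sub_zero,
    infDist_eq_infDist_frontier hx (closure_nonempty_iff.1 (hE.mono frontier_subset_closure))]

theorem abs_sgnDist_lt_of_mem_thickening {δ : ℝ} (hx : x ∈ thickening δ (frontier E)) :
    |sgnDist E x| < δ := by
  have hE : (frontier E).Nonempty := nonempty_iff_ne_empty.2 fun h => by simp [h] at hx
  have hd := (mem_thickening_iff_infDist_lt hE).1 hx
  by_cases hxE : x ∈ E
  · rwa [sgnDist_of_mem hxE hE, abs_neg, abs_of_nonneg infDist_nonneg]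
  · rwa [sgnDist_of_notMem hxE hE, abs_of_nonneg infDist_nonneg]

/-- The tangent ball at `p` on the far side of `∂E` from `x` misses the side of `x`, so its centre
is at distance at least `R + |d_E x|` from `x`, while `‖x - p‖ = |d_E x|`: equality in the
triangle inequality makes `x - p` parallel to the normal. -/
theorem IsOuterNormalOfRadius.sub_eq_sgnDist_smul (hR : 0 < R)
    (hν : IsOuterNormalOfRadius R E p ν) (hp : IsNearestPoint (frontier E) x p) :
    x - p = sgnDist E x • ν := by
  have hE : (frontier E).Nonempty := ⟨p, hp.1⟩
  have hEne : E.Nonempty := closure_nonempty_iff.1 (hE.mono frontier_subset_closure)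
  have hD : ‖x - p‖ = infDist x (frontier E) := by rw [← dist_eq_norm, hp.2]
  by_cases hxE : x ∈ E
  · have hfar : R ≤ dist x (p + R • ν) := not_lt.1 fun h => hν.ball_add_subset_compl h hxE
    have hle := infDist_le_dist_sub_of_ball_subset hR hν.ball_add_subset_compl hfar
    rw [infDist_compl_eq_infDist_frontier hxE (by rintro rfl; simp at hE), ← hD, dist_eq_norm,
      ← sub_sub, sub_eq_add_neg _ (R • ν), ← smul_neg] at hle
    rw [sgnDist_of_mem hxE hE, ← hD, neg_smul, ← smul_neg]
    exact eq_norm_smul_of_norm_add_le_norm_add_smul hR (by rw [norm_neg, hν.norm_eq_one])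
      (by linarith)
  · have hfar : R ≤ dist x (p - R • ν) := not_lt.1 fun h => hxE (hν.ball_sub_subset h)
    have hle := infDist_le_dist_sub_of_ball_subset hR hν.ball_sub_subset hfar
    rw [infDist_eq_infDist_frontier hxE hEne, ← hD, dist_eq_norm, sub_sub_eq_add_sub,
      add_sub_right_comm] at hle
    rw [sgnDist_of_notMem hxE hE, ← hD]
    exact eq_norm_smul_of_norm_add_le_norm_add_smul hR hν.norm_eq_one (by linarith)

theorem UR.exists_isOuterNormalOfRadius (hR : 0 < R) (hE : UR R E) (hp : p ∈ frontier E) :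
    ∃ ν, IsOuterNormalOfRadius R E p ν := by
  obtain ⟨p', p'', hp', hp'', hin, hout⟩ := hE.2 p hp
  have hsep := two_mul_le_dist_of_ball_subset_of_ball_subset_compl hR hin hout
  have hdiam : dist p' p'' = 2 * R :=
    le_antisymm ((dist_triangle_left p' p'' p).trans_eq (by rw [hp', hp'']; ring)) hsep
  have hmid : p = midpoint ℝ p' p'' :=
    eq_midpoint_of_dist_eq_half (by rw [dist_comm, hp', hdiam]; ring)
      (by rw [hp'', hdiam]; ring)
  have hRν : R • R⁻¹ • (p - p') = p - p' := by rw [smul_smul, mul_inv_cancel₀ hR.ne', one_smul]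
  refine ⟨R⁻¹ • (p - p'), ⟨?_, ?_, ?_⟩⟩
  · rw [norm_smul, ← dist_eq_norm, hp', norm_inv, Real.norm_of_nonneg hR.le,
      inv_mul_cancel₀ hR.ne']
  · rwa [hRν, sub_sub_cancel]
  · rwa [hRν, hmid, midpoint_sub_left, ← right_sub_midpoint, add_sub_cancel]

theorem UR.dist_le_two_mul_dist (hR : 0 < R) (hE : UR R E)
    (hx : x ∈ thickening (R / 2) (frontier E)) (hy : y ∈ thickening (R / 2) (frontier E))
    (hp : IsNearestPoint (frontier E) x p) (hq : IsNearestPoint (frontier E) y q) :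
    dist p q ≤ 2 * dist x y := by
  obtain ⟨νp, hνp⟩ := hE.exists_isOuterNormalOfRadius hR hp.1
  obtain ⟨νq, hνq⟩ := hE.exists_isOuterNormalOfRadius hR hq.1
  simpa only [dist_eq_norm] using hνp.norm_sub_le_two_mul_norm_sub hR hνq hp.1 hq.1
    (hνp.sub_eq_sgnDist_smul hR hp) (hνq.sub_eq_sgnDist_smul hR hq)
    (abs_sgnDist_lt_of_mem_thickening hx).le (abs_sgnDist_lt_of_mem_thickening hy).le

theorem UR.mul_dist_le_four_mul_dist (hR : 0 < R) (hE : UR R E)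
    (hx : x ∈ thickening (R / 2) (frontier E)) (hy : y ∈ thickening (R / 2) (frontier E))
    (hp : IsNearestPoint (frontier E) x p) (hq : IsNearestPoint (frontier E) y q)
    (hνp : IsOuterNormalOfRadius R E p νp) (hνq : IsOuterNormalOfRadius R E q νq) :
    R * dist νp νq ≤ 4 * dist x y := by
  have := hνp.mul_norm_sub_le hR hνq hp.1 hq.1
  rw [← dist_eq_norm, ← dist_eq_norm] at this
  linarith [hE.dist_le_two_mul_dist hR hx hy hp hq]

theorem UR.hasGradientAt_sgnDist (hR : 0 < R) (hE : UR R E)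
    (hx : x ∈ thickening (R / 2) (frontier E)) (hp : IsNearestPoint (frontier E) x p)
    (hν : IsOuterNormalOfRadius R E p ν) : HasGradientAt (sgnDist E) ν x := by
  refine hasGradientAt_of_abs_sub_inner_le_sq (C := 6 / R) ?_
  filter_upwards [isOpen_thickening.mem_nhds hx] with y hy
  obtain ⟨q, hq⟩ := exists_isNearestPoint_of_mem_thickening isClosed_frontier hy
  obtain ⟨νq, hνq⟩ := hE.exists_isOuterNormalOfRadius hR hq.1
  have := hν.mul_abs_sub_sub_inner_le hR hνq hp.1 hq.1 (hν.sub_eq_sgnDist_smul hR hp)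
    (hνq.sub_eq_sgnDist_smul hR hq) (abs_sgnDist_lt_of_mem_thickening hx).le
    (abs_sgnDist_lt_of_mem_thickening hy).le
  rw [div_mul_eq_mul_div, le_div_iff₀ hR]
  linarith

end SignedDistance

/-- Lemma on the projection and signed distance. For every `R > 0`
there is `C > 0`, depending only on `R` (and the dimension), such that for every open
set `E ∈ U_R`: the nearest-point projection `π_E` onto `∂E` is well defined on the
open `(R/2)`-neighbourhood of `∂E` and is `W^{1,∞}` there; the signed distance `d_E`
is `W^{2,∞}` there; and `‖d_E‖_{W^{2,∞}} ≤ C`, `‖π_E‖_{W^{1,∞}} ≤ C` on that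
neighbourhood. -/
theorem statement_13 (n : ℕ) (R : ℝ) (hR : 0 < R) :
    ∃ C > 0, ∀ E : Set (En n), UR R E →
      (∀ x ∈ thickening (R/2) (frontier E),
        ∃! y, y ∈ frontier E ∧ dist x y = infDist x (frontier E)) ∧
      (∃ π : En n → En n,
        (∀ x ∈ thickening (R/2) (frontier E),
          π x ∈ frontier E ∧ dist x (π x) = infDist x (frontier E)) ∧
        LipschitzOnWith (Real.toNNReal C) π (thickening (R/2) (frontier E))) ∧
      (∀ x ∈ thickening (R/2) (frontier E), DifferentiableAt ℝ (sgnDist E) x) ∧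
      (∀ x ∈ thickening (R/2) (frontier E),
        |sgnDist E x| ≤ C ∧ ‖gradient (sgnDist E) x‖ ≤ C) ∧
      LipschitzOnWith (Real.toNNReal C) (gradient (sgnDist E))
        (thickening (R/2) (frontier E)) := by
  have h4R : 0 < 4 / R := by positivity
  -- `2` bounds `Lip π_E`, `R` bounds `|d_E|` and `4 / R` bounds `Lip ∇d_E`
  refine ⟨2 + R + 4 / R, by positivity, fun E hE => ?_⟩
  have hC : ((2 + R + 4 / R).toNNReal : ℝ) = 2 + R + 4 / R := Real.coe_toNNReal _ (by positivity)
  set T := thickening (R / 2) (frontier E)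
  choose! ν hν using fun p (hp : p ∈ frontier E) => hE.exists_isOuterNormalOfRadius hR hp
  choose! π hπ using fun x (hx : x ∈ T) =>
    exists_isNearestPoint_of_mem_thickening isClosed_frontier hx
  have hπlip : ∀ x ∈ T, ∀ y ∈ T, dist (π x) (π y) ≤ 2 * dist x y := fun x hx y hy =>
    hE.dist_le_two_mul_dist hR hx hy (hπ x hx) (hπ y hy)
  have hgrad : ∀ x ∈ T, HasGradientAt (sgnDist E) (ν (π x)) x := fun x hx =>
    hE.hasGradientAt_sgnDist hR hx (hπ x hx) (hν _ (hπ x hx).1)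
  refine ⟨fun x hx => ⟨π x, hπ x hx, fun y hy => ?_⟩, ⟨π, hπ, ?_⟩,
    fun x hx => (hgrad x hx).differentiableAt, fun x hx => ⟨?_, ?_⟩, ?_⟩
  · simpa using hE.dist_le_two_mul_dist hR hx hx hy (hπ x hx)
  · refine LipschitzOnWith.of_dist_le_mul fun x hx y hy => ?_
    rw [hC]
    exact (hπlip x hx y hy).trans (by gcongr; linarith)
  · exact (abs_sgnDist_lt_of_mem_thickening hx).le.trans (by linarith)
  · rw [(hgrad x hx).gradient, (hν _ (hπ x hx).1).norm_eq_one]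
    linarith
  · refine LipschitzOnWith.of_dist_le_mul fun x hx y hy => ?_
    rw [hC, (hgrad x hx).gradient, (hgrad y hy).gradient]
    calc dist (ν (π x)) (ν (π y)) ≤ 4 / R * dist x y := by
          rw [div_mul_eq_mul_div, le_div_iff₀' hR]
          exact hE.mul_dist_le_four_mul_dist hR hx hy (hπ x hx) (hπ y hy)
            (hν _ (hπ x hx).1) (hν _ (hπ y hy).1)
      _ ≤ (2 + R + 4 / R) * dist x y := by gcongr; linarith
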